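/- arXiv:math/0506215 — 2 statements merged into one kernel-verified Lean document; each statement's English description precedes it below -/
import Mathlib

section
/- For an even integer m, a complex Banach space X, p ≥ 1 and v_1,…,v_n ∈ X: ∫_{(Z_m)^n} ‖Σ_{j=1}^n e^{2πi x_j/m} v_j‖^p dμ(x) ≥ (1/2^p) · E_ε ‖Σ_{j=1}^n ε_j v_j‖^p, where μ is uniform on (Z_m)^n and ε uniform on {−1,1}^n. -/
open Finset

/-- Average over the uniform probability measure on `(ZMod m)^n`. -/
noncomputable def zavg (n m : ℕ) [NeZero m] (g : (Fin n → ZMod m) → ℝ) : ℝ :=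
  (∑ x : Fin n → ZMod m, g x) / (m : ℝ) ^ n

/-- Expectation over uniform `ε ∈ {-1,1}^n` (encoded by `Bool`). -/
noncomputable def eavg (n : ℕ) (g : (Fin n → Bool) → ℝ) : ℝ :=
  (∑ ε : Fin n → Bool, g ε) / 2 ^ n

/-- The sign `±1 ∈ ℝ` associated to a Boolean. -/
def sgnR (b : Bool) : ℝ := if b then 1 else -1

/-- The character `a ↦ e^{2πia/m}` of `ZMod m`. -/
noncomputable def chr (m : ℕ) (a : ZMod m) : ℂ :=
  Complex.exp (2 * Real.pi * Complex.I * (a.val : ℂ) / m)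

/-! Translating `x_j ↦ x_j + m(1 - ε_j)/4` multiplies the `j`-th character by `ε_j`, so the left
side is the `x`-average of the Rademacher averages of `(e^{2πi x_j/m} v_j)_j`. For fixed `x`, the
contraction principle with the unimodular coefficients `e^{-2πi x_j/m}` bounds the Rademacher
average of `v` by `2^p` times that of `(e^{2πi x_j/m} v_j)_j`; the factor `2^p` comes from
splitting complex coefficients into real and imaginary parts. For real coefficients in `[-1, 1]`
the contraction principle holds because the Rademacher sum is convex in the coefficients, hence
maximal at a vertex of the cube, where it is unchanged by the signs. -/

section Rademacher

variable {ι X : Type*} [Fintype ι] [DecidableEq ι] [NormedAddCommGroup X]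

lemma convexOn_norm_rpow [NormedSpace ℝ X] {p : ℝ} (hp : 1 ≤ p) :
    ConvexOn ℝ Set.univ fun x : X => ‖x‖ ^ p := by
  refine ⟨convex_univ, fun x _ y _ a b ha hb hab => ?_⟩
  calc ‖a • x + b • y‖ ^ p ≤ (a * ‖x‖ + b * ‖y‖) ^ p := by
        refine Real.rpow_le_rpow (norm_nonneg _) ((norm_add_le _ _).trans_eq ?_) (by linarith)
        rw [norm_smul, norm_smul, Real.norm_of_nonneg ha, Real.norm_of_nonneg hb]
    _ ≤ a • ‖x‖ ^ p + b • ‖y‖ ^ p :=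
        (convexOn_rpow hp).2 (norm_nonneg x) (norm_nonneg y) ha hb hab

lemma norm_add_rpow_le [NormedSpace ℝ X] {p : ℝ} (hp : 1 ≤ p) (x y : X) :
    ‖x + y‖ ^ p ≤ 2 ^ p * ((‖x‖ ^ p + ‖y‖ ^ p) / 2) := by
  have hmid := (convexOn_norm_rpow hp).2 (Set.mem_univ x) (Set.mem_univ y)
    (by norm_num : (0 : ℝ) ≤ 1 / 2) (by norm_num : (0 : ℝ) ≤ 1 / 2) (by norm_num)
  have hxy : x + y = (2 : ℝ) • ((1 / 2 : ℝ) • x + (1 / 2 : ℝ) • y) := by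
    rw [smul_add, smul_smul, smul_smul]; norm_num
  rw [hxy, norm_smul, Real.mul_rpow (by norm_num) (norm_nonneg _), Real.norm_two]
  simp only [smul_eq_mul] at hmid
  gcongr
  linarith

lemma sgnR_mul_sgnR (a b : Bool) : sgnR a * sgnR b = sgnR (a == b) := by
  cases a <;> cases b <;> simp [sgnR]

noncomputable def rademacherSum [Module ℝ X] (p : ℝ) (w : ι → X) : ℝ :=
  ∑ ε : ι → Bool, ‖∑ j, sgnR (ε j) • w j‖ ^ p

lemma rademacherSum_sgnR_smul [Module ℝ X] (p : ℝ) (w : ι → X) (δ : ι → Bool) :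
    rademacherSum p (fun j => sgnR (δ j) • w j) = rademacherSum p w := by
  have hflip : Function.Involutive fun (ε : ι → Bool) j => ε j == δ j := fun ε =>
    funext fun j => by
      show ((ε j == δ j) == δ j) = ε j
      cases ε j <;> cases δ j <;> rfl
  refine Fintype.sum_equiv hflip.toPerm _ _ fun ε => ?_
  simp only [Function.Involutive.coe_toPerm, smul_smul, sgnR_mul_sgnR]

lemma convexOn_rademacherSum [NormedSpace ℝ X] {p : ℝ} (hp : 1 ≤ p) (w : ι → X) :
    ConvexOn ℝ Set.univ fun r : ι → ℝ => rademacherSum p fun j => r j • w j := by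
  have hterm (ε : ι → Bool) :
      ConvexOn ℝ Set.univ fun r : ι → ℝ => ‖∑ j, sgnR (ε j) • r j • w j‖ ^ p := by
    refine ((convexOn_norm_rpow hp).comp_linearMap
      (Fintype.linearCombination ℝ fun j => sgnR (ε j) • w j)).congr fun r _ => ?_
    simp only [Function.comp_apply, Fintype.linearCombination_apply, smul_comm (r _)]
  simp only [rademacherSum, ← sum_fn]
  exact sum_induction _ _ (fun _ _ => ConvexOn.add) (convexOn_const 0 convex_univ)
    fun ε _ => hterm ε

theorem rademacherSum_smul_le [NormedSpace ℝ X] {p : ℝ} (hp : 1 ≤ p) (w : ι → X)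
    {r : ι → ℝ} (hr : ∀ j, |r j| ≤ 1) :
    rademacherSum p (fun j => r j • w j) ≤ rademacherSum p w := by
  have hcube : r ∈ convexHull ℝ (Set.univ.pi fun _ => ({-1, 1} : Set ℝ)) := by
    rw [convexHull_pi, convexHull_pair, segment_eq_Icc (by norm_num)]
    exact fun j _ => abs_le.1 (hr j)
  obtain ⟨y, hy, hry⟩ :=
    (convexOn_rademacherSum hp w).exists_ge_of_mem_convexHull (Set.subset_univ _) hcube
  have hy_sgn (j : ι) : sgnR (decide (y j = 1)) = y j := by
    obtain h | h : y j = -1 ∨ y j = 1 := hy j (Set.mem_univ j) <;> norm_num [h, sgnR]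
  calc rademacherSum p (fun j => r j • w j) ≤ rademacherSum p (fun j => y j • w j) := hry
    _ = rademacherSum p (fun j => sgnR (decide (y j = 1)) • w j) := by simp only [hy_sgn]
    _ = rademacherSum p w := rademacherSum_sgnR_smul p w _

theorem rademacherSum_complex_smul_le [NormedSpace ℂ X] {p : ℝ} (hp : 1 ≤ p) (w : ι → X)
    {a : ι → ℂ} (ha : ∀ j, ‖a j‖ ≤ 1) :
    rademacherSum p (fun j => a j • w j) ≤ 2 ^ p * rademacherSum p w := by
  have hsplit (ε : ι → Bool) : ∑ j, sgnR (ε j) • a j • w j =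
      ∑ j, sgnR (ε j) • (a j).re • w j + Complex.I • ∑ j, sgnR (ε j) • (a j).im • w j := by
    rw [smul_sum, ← sum_add_distrib]
    refine sum_congr rfl fun j _ => ?_
    conv_lhs => rw [← Complex.re_add_im (a j)]
    rw [add_smul, mul_comm, mul_smul, Complex.coe_smul, Complex.coe_smul, smul_add,
      smul_comm (sgnR (ε j)) Complex.I]
  calc rademacherSum p (fun j => a j • w j)
      ≤ 2 ^ p * ((rademacherSum p (fun j => (a j).re • w j)
          + rademacherSum p (fun j => (a j).im • w j)) / 2) := by
        simp only [rademacherSum]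
        rw [← sum_add_distrib, sum_div, mul_sum]
        gcongr with ε
        rw [hsplit]
        refine (norm_add_rpow_le hp _ _).trans_eq ?_
        rw [norm_smul, Complex.norm_I, one_mul]
    _ ≤ 2 ^ p * ((rademacherSum p w + rademacherSum p w) / 2) := by
        gcongr
        · exact rademacherSum_smul_le hp w fun j => (Complex.abs_re_le_norm _).trans (ha j)
        · exact rademacherSum_smul_le hp w fun j => (Complex.abs_im_le_norm _).trans (ha j)
    _ = 2 ^ p * rademacherSum p w := by ring

end Rademacher

section Character

variable {m : ℕ} [NeZero m]

lemma chr_eq_toCircle (a : ZMod m) : chr m a = ZMod.toCircle a := by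
  rw [chr, ZMod.toCircle_apply]

lemma chr_add (a b : ZMod m) : chr m (a + b) = chr m a * chr m b := by
  simp only [chr_eq_toCircle, AddChar.map_add_eq_mul, Circle.coe_mul]

lemma norm_chr (a : ZMod m) : ‖chr m a‖ = 1 := by
  rw [chr_eq_toCircle, Circle.norm_coe]

lemma chr_neg_mul_chr (a : ZMod m) : chr m (-a) * chr m a = 1 := by
  rw [← chr_add, neg_add_cancel, chr_eq_toCircle, AddChar.map_zero_eq_one, Circle.coe_one]

lemma exists_chr_eq_sgnR (hm : Even m) (b : Bool) : ∃ c : ZMod m, chr m c = sgnR b := by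
  cases b
  · obtain ⟨k, rfl⟩ := hm
    have hk : (k : ℂ) ≠ 0 := by
      have := NeZero.ne (k + k)
      exact_mod_cast (by omega : k ≠ 0)
    refine ⟨k, ?_⟩
    rw [chr_eq_toCircle, ZMod.toCircle_natCast, Nat.cast_add,
      show 2 * Real.pi * Complex.I * k / (k + k) = Real.pi * Complex.I by field_simp; ring,
      Complex.exp_pi_mul_I]
    simp [sgnR]
  · exact ⟨0, by simp [chr_eq_toCircle, sgnR]⟩

variable {ι X : Type*} [Fintype ι] [DecidableEq ι] [NormedAddCommGroup X] [NormedSpace ℂ X]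

lemma sum_rademacherSum_chr_smul (hm : Even m) (p : ℝ) (v : ι → X) :
    ∑ x : ι → ZMod m, rademacherSum p (fun j => chr m (x j) • v j)
      = 2 ^ Fintype.card ι * ∑ x : ι → ZMod m, ‖∑ j, chr m (x j) • v j‖ ^ p := by
  choose c hc using exists_chr_eq_sgnR hm
  have hshift (ε : ι → Bool) :
      ∑ x : ι → ZMod m, ‖∑ j, sgnR (ε j) • chr m (x j) • v j‖ ^ p
        = ∑ x : ι → ZMod m, ‖∑ j, chr m (x j) • v j‖ ^ p := by
    refine Fintype.sum_equiv (Equiv.addRight fun j => c (ε j)) _ _ fun x => ?_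
    simp only [Equiv.coe_addRight, Pi.add_apply, chr_add, hc, mul_smul, Complex.coe_smul,
      smul_comm (chr m _)]
  simp only [rademacherSum]
  rw [sum_comm, sum_congr rfl fun ε _ => hshift ε, sum_const, card_univ, Fintype.card_fun,
    Fintype.card_bool, nsmul_eq_mul, Nat.cast_pow, Nat.cast_ofNat]

end Character

theorem stmt3_general (X : Type*) [NormedAddCommGroup X] [NormedSpace ℂ X]
    (p : ℝ) (hp : 1 ≤ p) (n m : ℕ) [NeZero m] (hm : Even m)
    (v : Fin n → X) :
    (zavg n m fun x => ‖∑ j, chr m (x j) • v j‖ ^ p)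
      ≥ (1 / 2 ^ p) * eavg n fun ε => ‖∑ j, sgnR (ε j) • v j‖ ^ p := by
  set G := ∑ x : Fin n → ZMod m, ‖∑ j, chr m (x j) • v j‖ ^ p
  have hcontract (x : Fin n → ZMod m) :
      rademacherSum p v ≤ 2 ^ p * rademacherSum p (fun j => chr m (x j) • v j) := by
    simpa only [smul_smul, chr_neg_mul_chr, one_smul] using
      rademacherSum_complex_smul_le hp (fun j => chr m (x j) • v j)
        (a := fun j => chr m (-x j)) fun j => (norm_chr _).le
  have hsum : (m : ℝ) ^ n * rademacherSum p v ≤ 2 ^ p * (2 ^ n * G) :=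
    calc (m : ℝ) ^ n * rademacherSum p v = ∑ _x : Fin n → ZMod m, rademacherSum p v := by
          simp [ZMod.card]
      _ ≤ ∑ x : Fin n → ZMod m, 2 ^ p * rademacherSum p (fun j => chr m (x j) • v j) :=
          sum_le_sum fun x _ => hcontract x
      _ = 2 ^ p * (2 ^ n * G) := by
          rw [← mul_sum, sum_rademacherSum_chr_smul hm, Fintype.card_fin]
  change G / (m : ℝ) ^ n ≥ 1 / 2 ^ p * (rademacherSum p v / 2 ^ n)
  have hm_pos : (0 : ℝ) < (m : ℝ) ^ n := pow_pos (Nat.cast_pos.2 (NeZero.pos m)) n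
  rw [ge_iff_le, div_mul_div_comm, one_mul, div_le_div_iff₀ (by positivity) hm_pos]
  linarith

theorem stmt3 (X : Type*) [NormedAddCommGroup X] [NormedSpace ℂ X]
    (p : ℝ) (hp : 1 ≤ p) (n m : ℕ) [NeZero m] (hm : Even m) (hm0 : 0 < m)
    (v : Fin n → X) :
    (zavg n m fun x => ‖∑ j, chr m (x j) • v j‖ ^ p)
      ≥ (1 / 2 ^ p) * eavg n fun ε => ‖∑ j, sgnR (ε j) • v j‖ ^ p :=
  stmt3_general X p hp n m hm v
end

section
/- Averaging operator approximation lemma: let k be odd, m > 2k even, and define A^{(k)}f(x) = k^{−n} Σ_{z ∈ (−k,k)^n ∩ (2ℤ)^n} f(x+z). Then for every f : (Z_m)^n → X and p ≥ 1, ∫ ‖A^{(k)}f(x) − f(x)‖^p dμ(x) ≤ (k−1)^p n^{p−1} Σ_{j=1}^n ∫ ‖f(x+e_j) − f(x)‖^p dμ(x). -/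
/-!
Write `E(c) = ∑ₓ ‖f (x + c) - f x‖ ^ p`. By translation invariance, telescoping and the power-mean
inequality `(∑_{i<N} aᵢ)^p ≤ N^(p-1) ∑ aᵢ^p`, `E` satisfies `E(∑_{i<N} cᵢ) ≤ N^(p-1) ∑ E(cᵢ)`; in
particular `E(t • c) ≤ |t|^p E(c)`. A shift `z` of the cube has `|zⱼ| ≤ k - 1`, so
`E(z) ≤ (k-1)^p n^(p-1) ∑ⱼ E(eⱼ)`. Finally `A f x - f x` is the average of `f (x + z) - f x`
over the `k ^ n` points `z` of the cube, and Jensen's inequality moves the `p`-th power inside.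
-/

open Finset

/-- The cube `(-k,k)^n ∩ (2ℤ)^n` of integer points with even coordinates. -/
noncomputable def evenCube (k n : ℕ) : Finset (Fin n → ℤ) :=
  Fintype.piFinset fun _ => (Finset.Ioo (-(k : ℤ)) (k : ℤ)).filter (fun a => Even a)

/-- The averaging operator `A^{(k)} f (x) = k^{-n} ∑_{z ∈ (-k,k)^n ∩ (2ℤ)^n} f(x+z)`. -/
noncomputable def Aop (X : Type*) [NormedAddCommGroup X] [NormedSpace ℝ X]
    (k n m : ℕ) (f : (Fin n → ZMod m) → X) (x : Fin n → ZMod m) : X :=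
  (((k : ℝ) ^ n)⁻¹) • ∑ z ∈ evenCube k n, f (x + fun i => ((z i : ZMod m)))

lemma norm_sum_rpow_le {ι E : Type*} [SeminormedAddCommGroup E] (s : Finset ι) (v : ι → E)
    {p : ℝ} (hp : 1 ≤ p) :
    ‖∑ i ∈ s, v i‖ ^ p ≤ (#s : ℝ) ^ (p - 1) * ∑ i ∈ s, ‖v i‖ ^ p :=
  (Real.rpow_le_rpow (norm_nonneg _) (norm_sum_le s v) (by linarith)).trans
    (Real.rpow_sum_le_const_mul_sum_rpow_of_nonneg s hp fun i _ => norm_nonneg (v i))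

lemma norm_card_inv_smul_sum_rpow_le {ι E : Type*} [SeminormedAddCommGroup E] [NormedSpace ℝ E]
    (s : Finset ι) (v : ι → E) {p : ℝ} (hp : 1 ≤ p) :
    ‖(#s : ℝ)⁻¹ • ∑ i ∈ s, v i‖ ^ p ≤ (#s : ℝ)⁻¹ * ∑ i ∈ s, ‖v i‖ ^ p := by
  rcases s.eq_empty_or_nonempty with rfl | hs
  · simp [Real.zero_rpow (by linarith : p ≠ 0)]
  have hc : (0 : ℝ) < #s := by exact_mod_cast hs.card_pos
  rw [norm_smul, Real.mul_rpow (by positivity) (norm_nonneg _), Real.norm_eq_abs,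
    abs_of_pos (inv_pos.2 hc)]
  calc (#s : ℝ)⁻¹ ^ p * ‖∑ i ∈ s, v i‖ ^ p
      ≤ (#s : ℝ)⁻¹ ^ p * ((#s : ℝ) ^ (p - 1) * ∑ i ∈ s, ‖v i‖ ^ p) := by
        gcongr; exact norm_sum_rpow_le s v hp
    _ = (#s : ℝ)⁻¹ * ∑ i ∈ s, ‖v i‖ ^ p := by
        rw [← mul_assoc, Real.inv_rpow hc.le, Real.rpow_sub_one hc.ne']
        field_simp

section ShiftEnergy

variable {G X : Type*} [AddCommGroup G] [Fintype G] [SeminormedAddCommGroup X]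

/-- `shiftEnergy p f c / m ^ n` is the average `∫ ‖f (x + c) - f x‖ ^ p dμ` of the statement. -/
noncomputable def shiftEnergy (p : ℝ) (f : G → X) (c : G) : ℝ :=
  ∑ x, ‖f (x + c) - f x‖ ^ p

variable {p : ℝ} (f : G → X)

lemma shiftEnergy_nonneg (c : G) : 0 ≤ shiftEnergy p f c :=
  sum_nonneg fun _ _ => Real.rpow_nonneg (norm_nonneg _) p

lemma sum_translate_eq_shiftEnergy (a c : G) :
    ∑ x, ‖f (x + a + c) - f (x + a)‖ ^ p = shiftEnergy p f c :=
  Fintype.sum_equiv (Equiv.addRight a) _ (fun y => ‖f (y + c) - f y‖ ^ p) fun _ => rfl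

lemma shiftEnergy_neg (c : G) : shiftEnergy p f (-c) = shiftEnergy p f c := by
  rw [← sum_translate_eq_shiftEnergy f (-c) c]
  simp only [shiftEnergy, neg_add_cancel_right, norm_sub_rev]

lemma shiftEnergy_sum_range_le (hp : 1 ≤ p) (c : ℕ → G) (N : ℕ) :
    shiftEnergy p f (∑ i ∈ range N, c i) ≤
      (N : ℝ) ^ (p - 1) * ∑ i ∈ range N, shiftEnergy p f (c i) := by
  have telescope : ∀ x, f (x + ∑ i ∈ range N, c i) - f x =
      ∑ a ∈ range N, (f (x + ∑ i ∈ range a, c i + c a) - f (x + ∑ i ∈ range a, c i)) := by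
    intro x
    simp_rw [add_assoc, ← sum_range_succ]
    simpa using (sum_range_sub (fun a => f (x + ∑ i ∈ range a, c i)) N).symm
  calc shiftEnergy p f (∑ i ∈ range N, c i)
      ≤ ∑ x, (N : ℝ) ^ (p - 1) * ∑ a ∈ range N,
          ‖f (x + ∑ i ∈ range a, c i + c a) - f (x + ∑ i ∈ range a, c i)‖ ^ p := by
        refine sum_le_sum fun x _ => ?_
        rw [telescope x]
        refine (norm_sum_rpow_le (range N) _ hp).trans_eq ?_
        rw [card_range]
    _ = (N : ℝ) ^ (p - 1) * ∑ a ∈ range N, shiftEnergy p f (c a) := by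
        rw [← mul_sum, sum_comm]
        simp_rw [sum_translate_eq_shiftEnergy]

lemma shiftEnergy_sum_le (hp : 1 ≤ p) {N : ℕ} (c : Fin N → G) :
    shiftEnergy p f (∑ i, c i) ≤ (N : ℝ) ^ (p - 1) * ∑ i, shiftEnergy p f (c i) := by
  have h := shiftEnergy_sum_range_le f hp (fun a => if h : a < N then c ⟨a, h⟩ else 0) N
  simpa only [sum_range, Fin.is_lt, dif_pos] using h

lemma shiftEnergy_nsmul_le (hp : 1 ≤ p) (u : ℕ) (c : G) :
    shiftEnergy p f (u • c) ≤ (u : ℝ) ^ p * shiftEnergy p f c := by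
  rcases Nat.eq_zero_or_pos u with rfl | hu
  · simp [shiftEnergy, Real.zero_rpow (by linarith : p ≠ 0)]
  have h := shiftEnergy_sum_range_le f hp (fun _ => c) u
  rw [sum_const, card_range, sum_const, card_range, nsmul_eq_mul, ← mul_assoc,
    ← Real.rpow_add_one (by positivity), sub_add_cancel] at h
  exact h

lemma shiftEnergy_zsmul_le (hp : 1 ≤ p) (t : ℤ) (c : G) :
    shiftEnergy p f (t • c) ≤ |(t : ℝ)| ^ p * shiftEnergy p f c := by
  obtain ⟨u, rfl | rfl⟩ := Int.eq_nat_or_neg t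
  · simpa using shiftEnergy_nsmul_le f hp u c
  · simpa [shiftEnergy_neg] using shiftEnergy_nsmul_le f hp u c

lemma shiftEnergy_sum_zsmul_le (hp : 1 ≤ p) {N : ℕ} (e : Fin N → G)
    (z : Fin N → ℤ) {K : ℝ} (hz : ∀ j, |(z j : ℝ)| ≤ K) :
    shiftEnergy p f (∑ j, z j • e j) ≤
      K ^ p * (N : ℝ) ^ (p - 1) * ∑ j, shiftEnergy p f (e j) := by
  calc shiftEnergy p f (∑ j, z j • e j)
      ≤ (N : ℝ) ^ (p - 1) * ∑ j, |(z j : ℝ)| ^ p * shiftEnergy p f (e j) :=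
        (shiftEnergy_sum_le f hp _).trans <| by
          gcongr with j; exact shiftEnergy_zsmul_le f hp (z j) (e j)
    _ ≤ (N : ℝ) ^ (p - 1) * ∑ j, K ^ p * shiftEnergy p f (e j) := by
        gcongr with j
        · exact shiftEnergy_nonneg f (e j)
        · exact hz j
    _ = K ^ p * (N : ℝ) ^ (p - 1) * ∑ j, shiftEnergy p f (e j) := by
        rw [← mul_sum]; ring

end ShiftEnergy

lemma card_filter_even_Ioo {k : ℕ} (hk : Odd k) : #{a ∈ Ioo (-(k : ℤ)) k | Even a} = k := by
  obtain ⟨r, rfl⟩ := hk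
  have : {a ∈ Ioo (-((2 * r + 1 : ℕ) : ℤ)) (2 * r + 1 : ℕ) | Even a} =
      (Icc (-(r : ℤ)) r).image (2 * ·) := by
    ext a
    simp only [mem_filter, mem_Ioo, mem_image, mem_Icc, Int.even_iff]
    constructor
    · rintro ⟨⟨h1, h2⟩, h3⟩
      exact ⟨a / 2, by omega, by omega⟩
    · rintro ⟨b, ⟨hb1, hb2⟩, rfl⟩
      omega
  rw [this, card_image_of_injective _ fun a b h => by omega, Int.card_Icc]
  omega

lemma card_evenCube {k : ℕ} (hk : Odd k) (n : ℕ) : #(evenCube k n) = k ^ n := by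
  simp [evenCube, Fintype.card_piFinset, card_filter_even_Ioo hk]

lemma abs_le_sub_one_of_mem_evenCube {k n : ℕ} {z : Fin n → ℤ} (hz : z ∈ evenCube k n)
    (j : Fin n) : |(z j : ℝ)| ≤ k - 1 := by
  have hj := (mem_filter.1 (Fintype.mem_piFinset.1 hz j)).1
  rw [mem_Ioo] at hj
  have : |z j| ≤ (k : ℤ) - 1 := abs_le.2 ⟨by omega, by omega⟩
  exact_mod_cast this

lemma shiftEnergy_le_of_mem_evenCube {R X : Type*} [Ring R] [Fintype R]
    [SeminormedAddCommGroup X] {p : ℝ} (hp : 1 ≤ p) {k n : ℕ} (f : (Fin n → R) → X)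
    {z : Fin n → ℤ} (hz : z ∈ evenCube k n) :
    shiftEnergy p f (fun i => (z i : R)) ≤
      ((k : ℝ) - 1) ^ p * (n : ℝ) ^ (p - 1) * ∑ j, shiftEnergy p f (Pi.single j 1) := by
  have hsum : (fun i => (z i : R)) = ∑ j, z j • Pi.single j (1 : R) := by
    simp_rw [← Pi.single_smul, zsmul_one, Finset.univ_sum_single]
  rw [hsum]
  exact shiftEnergy_sum_zsmul_le f hp _ z (abs_le_sub_one_of_mem_evenCube hz)

lemma sum_norm_Aop_sub_rpow_le (X : Type*) [NormedAddCommGroup X] [NormedSpace ℝ X]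
    {p : ℝ} (hp : 1 ≤ p) {n m k : ℕ} [NeZero m] (hk : Odd k) (f : (Fin n → ZMod m) → X) :
    ∑ x, ‖Aop X k n m f x - f x‖ ^ p ≤
      ((k : ℝ) ^ n)⁻¹ * ∑ z ∈ evenCube k n, shiftEnergy p f (fun i => (z i : ZMod m)) := by
  have hcard : (#(evenCube k n) : ℝ) = (k : ℝ) ^ n := by exact_mod_cast card_evenCube hk n
  have hA : ∀ x, Aop X k n m f x - f x =
      (#(evenCube k n) : ℝ)⁻¹ • ∑ z ∈ evenCube k n, (f (x + fun i => (z i : ZMod m)) - f x) := by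
    intro x
    have hcard_ne : (#(evenCube k n) : ℝ) ≠ 0 := by
      rw [hcard]; exact pow_ne_zero _ (by exact_mod_cast hk.pos.ne')
    rw [sum_sub_distrib, smul_sub, sum_const, ← Nat.cast_smul_eq_nsmul ℝ, smul_smul,
      inv_mul_cancel₀ hcard_ne, one_smul, Aop, hcard]
  calc ∑ x, ‖Aop X k n m f x - f x‖ ^ p
      ≤ ∑ x, ((k : ℝ) ^ n)⁻¹ *
          ∑ z ∈ evenCube k n, ‖f (x + fun i => (z i : ZMod m)) - f x‖ ^ p := by
        refine sum_le_sum fun x _ => ?_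
        rw [hA, ← hcard]
        exact norm_card_inv_smul_sum_rpow_le _ _ hp
    _ = ((k : ℝ) ^ n)⁻¹ * ∑ z ∈ evenCube k n, shiftEnergy p f (fun i => (z i : ZMod m)) := by
        rw [← mul_sum, sum_comm]; rfl

theorem stmt6_general (X : Type*) [NormedAddCommGroup X] [NormedSpace ℝ X]
    (p : ℝ) (hp : 1 ≤ p) (n m k : ℕ) [NeZero m] (hk : Odd k)
    (f : (Fin n → ZMod m) → X) :
    (zavg n m fun x => ‖Aop X k n m f x - f x‖ ^ p)
      ≤ ((k : ℝ) - 1) ^ p * (n : ℝ) ^ (p - 1) *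
        ∑ j, zavg n m fun x => ‖f (x + Pi.single j 1) - f x‖ ^ p := by
  set B := ((k : ℝ) - 1) ^ p * (n : ℝ) ^ (p - 1) *
    ∑ j, shiftEnergy p f (Pi.single j (1 : ZMod m))
  have hsum : ∑ x, ‖Aop X k n m f x - f x‖ ^ p ≤ B :=
    calc ∑ x, ‖Aop X k n m f x - f x‖ ^ p
        ≤ ((k : ℝ) ^ n)⁻¹ * ∑ z ∈ evenCube k n, shiftEnergy p f (fun i => (z i : ZMod m)) :=
          sum_norm_Aop_sub_rpow_le X hp hk f
      _ ≤ ((k : ℝ) ^ n)⁻¹ * ∑ _z ∈ evenCube k n, B := by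
          gcongr with z hz; exact shiftEnergy_le_of_mem_evenCube hp f hz
      _ = B := by
          have hk_ne : (k : ℝ) ^ n ≠ 0 := pow_ne_zero n (by exact_mod_cast hk.pos.ne')
          rw [sum_const, card_evenCube hk, nsmul_eq_mul, Nat.cast_pow, inv_mul_cancel_left₀ hk_ne]
  calc zavg n m (fun x => ‖Aop X k n m f x - f x‖ ^ p) ≤ B / (m : ℝ) ^ n := by
        unfold zavg; gcongr
    _ = _ := by rw [mul_div_assoc, sum_div]; rfl

theorem stmt6 (X : Type*) [NormedAddCommGroup X] [NormedSpace ℝ X]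
    (p : ℝ) (hp : 1 ≤ p) (n m k : ℕ) [NeZero m] (hk : Odd k) (hkm : 2 * k < m)
    (hm : Even m) (f : (Fin n → ZMod m) → X) :
    (zavg n m fun x => ‖Aop X k n m f x - f x‖ ^ p)
      ≤ ((k : ℝ) - 1) ^ p * (n : ℝ) ^ (p - 1) *
        ∑ j, zavg n m fun x => ‖f (x + Pi.single j 1) - f x‖ ^ p :=
  stmt6_general X p hp n m k hk f
end
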